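/- arXiv:math/0207184 — 2 statements merged into one kernel-verified Lean document; each statement's English description precedes it below -/
import Mathlib

section
/- For every λ1 ∈ Λ1, distinct elements of L1(λ1) lie in distinct cosets of Λs (i.e. if λ2, λ2' ∈ L1(λ1) and λ2' − λ2 ∈ Λs then λ2' = λ2), and |L1(λ1)| = N1 = [Λ2 : Λs]. Similarly, for every λ2 ∈ Λ2, distinct elements of L2(λ2) lie in distinct cosets of Λs and |L2(λ2)| = N2 = [Λ1 : Λs]. -/
/-- `Λ` is a (full-rank) lattice in `ℝ^L`: the `ℤ`-span of an `ℝ`-basis. -/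
def IsLattice {L : ℕ} (Λ : AddSubgroup (EuclideanSpace ℝ (Fin L))) : Prop :=
  ∃ b : Module.Basis (Fin L) ℝ (EuclideanSpace ℝ (Fin L)),
    Λ = AddSubgroup.closure (Set.range ⇑b)

/-- `Λ'` is clean in `Λ`: every point of `Λ` has a unique nearest point of `Λ'`
in the Euclidean norm. -/
def IsClean {L : ℕ} (Λ Λ' : AddSubgroup (EuclideanSpace ℝ (Fin L))) : Prop :=
  ∀ x ∈ Λ, ∃! p, p ∈ Λ' ∧ ∀ q ∈ Λ', ‖x - p‖ ≤ ‖x - q‖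

/-- The discrete Voronoi set `V0 = {λ ∈ Λ : ‖λ‖ < ‖λ - s‖ for all nonzero s ∈ Λs}`. -/
def voronoiSet {L : ℕ} (Λ Λs : AddSubgroup (EuclideanSpace ℝ (Fin L))) :
    Set (EuclideanSpace ℝ (Fin L)) :=
  {x | x ∈ Λ ∧ ∀ s ∈ Λs, s ≠ 0 → ‖x‖ < ‖x - s‖}

/-- `L1(λ1) = Λ2 ∩ (λ1 + V0)`. -/
def L1Set {L : ℕ} (Λ Λ2 Λs : AddSubgroup (EuclideanSpace ℝ (Fin L)))
    (lam1 : EuclideanSpace ℝ (Fin L)) : Set (EuclideanSpace ℝ (Fin L)) :=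
  {x | x ∈ Λ2 ∧ x - lam1 ∈ voronoiSet Λ Λs}

/-- `L2(λ2) = Λ1 ∩ (λ2 + V0)`. -/
def L2Set {L : ℕ} (Λ Λ1 Λs : AddSubgroup (EuclideanSpace ℝ (Fin L)))
    (lam2 : EuclideanSpace ℝ (Fin L)) : Set (EuclideanSpace ℝ (Fin L)) :=
  {x | x ∈ Λ1 ∧ x - lam2 ∈ voronoiSet Λ Λs}


/-!
Since `Λs` is clean in `Λ`, every `x ∈ Λ` can be written as `s + v` with `s ∈ Λs` and `v ∈ V0`
(take `s` the nearest point of `Λs`); the strict inequalities defining `V0` make `s` unique.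
Hence every translate `λ + V0` with `λ ∈ Λ` meets each coset of `Λs` in `Λ` exactly once, so for
`Λs ≤ M ≤ Λ` the set `M ∩ (λ + V0)` is a transversal of `M ⧸ Λs`, of size `[M : Λs]`.
-/

variable {L : ℕ} {Λ M Λs : AddSubgroup (EuclideanSpace ℝ (Fin L))}
  {lam x y s t : EuclideanSpace ℝ (Fin L)}

lemma eq_of_sub_mem_voronoiSet (hs : s ∈ Λs) (ht : t ∈ Λs)
    (hxs : x - s ∈ voronoiSet Λ Λs) (hxt : x - t ∈ voronoiSet Λ Λs) : s = t := by
  by_contra hst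
  have hts : ‖x - t‖ < ‖x - s‖ := by
    simpa using hxt.2 (s - t) (Λs.sub_mem hs ht) (sub_ne_zero.mpr hst)
  have hst' : ‖x - s‖ < ‖x - t‖ := by
    simpa using hxs.2 (t - s) (Λs.sub_mem ht hs) (sub_ne_zero.mpr (Ne.symm hst))
  exact lt_asymm hts hst'

lemma IsClean.exists_sub_mem_voronoiSet (hclean : IsClean Λ Λs) (hsΛ : Λs ≤ Λ) (hx : x ∈ Λ) :
    ∃ s ∈ Λs, x - s ∈ voronoiSet Λ Λs := by
  obtain ⟨p, ⟨hp, hpnear⟩, hpuniq⟩ := hclean x hx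
  refine ⟨p, hp, Λ.sub_mem hx (hsΛ hp), fun s hs hs0 => ?_⟩
  have hle : ‖x - p‖ ≤ ‖x - p - s‖ := by
    simpa [sub_add_eq_sub_sub] using hpnear (p + s) (Λs.add_mem hp hs)
  refine hle.lt_of_ne fun heq => hs0 ?_
  have hnear : ∀ q ∈ Λs, ‖x - (p + s)‖ ≤ ‖x - q‖ := fun q hq => by
    rw [sub_add_eq_sub_sub, ← heq]
    exact hpnear q hq
  exact add_eq_left.mp (hpuniq (p + s) ⟨Λs.add_mem hp hs, hnear⟩)

lemma L1Set_eq_of_sub_mem (hx : x ∈ L1Set Λ M Λs lam) (hy : y ∈ L1Set Λ M Λs lam)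
    (hyx : y - x ∈ Λs) : y = x := by
  have hxV : (y - lam) - (y - x) ∈ voronoiSet Λ Λs := by
    rw [sub_sub_sub_cancel_left]
    exact hx.2
  have hyV : (y - lam) - 0 ∈ voronoiSet Λ Λs := by
    rw [sub_zero]
    exact hy.2
  exact sub_eq_zero.mp (eq_of_sub_mem_voronoiSet hyx Λs.zero_mem hxV hyV)

lemma IsClean.ncard_L1Set (hclean : IsClean Λ Λs) (hM : M ≤ Λ) (hsM : Λs ≤ M) (hlam : lam ∈ Λ) :
    (L1Set Λ M Λs lam).ncard = (Λs.addSubgroupOf M).index := by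
  let f : L1Set Λ M Λs lam → M ⧸ Λs.addSubgroupOf M := fun x => (⟨x.1, x.2.1⟩ : M)
  have hinj : Function.Injective f := by
    rintro ⟨x, hx⟩ ⟨y, hy⟩ hxy
    have hyx : y - x ∈ Λs := by
      simpa [AddSubgroup.mem_addSubgroupOf, neg_add_eq_sub] using QuotientAddGroup.eq.mp hxy
    exact Subtype.ext (L1Set_eq_of_sub_mem hx hy hyx).symm
  have hsurj : Function.Surjective f := by
    intro q
    induction q using QuotientAddGroup.induction_on with
    | H z =>
      obtain ⟨s, hs, hV⟩ :=
        hclean.exists_sub_mem_voronoiSet (hsM.trans hM) (Λ.sub_mem (hM z.2) hlam)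
      have hmem : (z : EuclideanSpace ℝ (Fin L)) - s ∈ L1Set Λ M Λs lam :=
        ⟨M.sub_mem z.2 (hsM hs), by rwa [sub_right_comm]⟩
      refine ⟨⟨_, hmem⟩, QuotientAddGroup.eq.mpr ?_⟩
      rw [AddSubgroup.mem_addSubgroupOf]
      simpa using hs
  rw [← Nat.card_coe_set_eq]
  exact Nat.card_eq_of_bijective f ⟨hinj, hsurj⟩

theorem stmt2_general {L : ℕ} (Λ Λ1 Λ2 Λs : AddSubgroup (EuclideanSpace ℝ (Fin L)))
    (h1 : Λ1 ≤ Λ) (h2 : Λ2 ≤ Λ)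
    (hs1 : Λs ≤ Λ1) (hs2 : Λs ≤ Λ2)
    (hclean : IsClean Λ Λs)
    (N1 N2 : ℕ)
    (hidx1 : (Λs.addSubgroupOf Λ2).index = N1)
    (hidx2 : (Λs.addSubgroupOf Λ1).index = N2) :
    (∀ lam1 ∈ Λ1,
      (∀ x ∈ L1Set Λ Λ2 Λs lam1, ∀ y ∈ L1Set Λ Λ2 Λs lam1, y - x ∈ Λs → y = x) ∧
        (L1Set Λ Λ2 Λs lam1).ncard = N1) ∧
    (∀ lam2 ∈ Λ2,
      (∀ x ∈ L2Set Λ Λ1 Λs lam2, ∀ y ∈ L2Set Λ Λ1 Λs lam2, y - x ∈ Λs → y = x) ∧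
        (L2Set Λ Λ1 Λs lam2).ncard = N2) :=
  -- `L2Set Λ Λ1 Λs` is `L1Set Λ Λ1 Λs` by definition.
  ⟨fun _ hlam1 => ⟨fun _ hx _ hy => L1Set_eq_of_sub_mem hx hy,
      (hclean.ncard_L1Set h2 hs2 (h1 hlam1)).trans hidx1⟩,
    fun _ hlam2 => ⟨fun _ hx _ hy => L1Set_eq_of_sub_mem hx hy,
      (hclean.ncard_L1Set h1 hs1 (h2 hlam2)).trans hidx2⟩⟩

theorem stmt2 {L : ℕ} (Λ Λ1 Λ2 Λs : AddSubgroup (EuclideanSpace ℝ (Fin L)))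
    (hΛ : IsLattice Λ) (h1 : Λ1 ≤ Λ) (h2 : Λ2 ≤ Λ)
    (hs1 : Λs ≤ Λ1) (hs2 : Λs ≤ Λ2)
    (hclean : IsClean Λ Λs)
    (N1 N2 : ℕ) (hN1pos : 0 < N1) (hN2pos : 0 < N2)
    (hidx1 : (Λs.addSubgroupOf Λ2).index = N1)
    (hidx2 : (Λs.addSubgroupOf Λ1).index = N2)
    (hidxs : (Λs.addSubgroupOf Λ).index = N1 * N2) :
    (∀ lam1 ∈ Λ1,
      (∀ x ∈ L1Set Λ Λ2 Λs lam1, ∀ y ∈ L1Set Λ Λ2 Λs lam1, y - x ∈ Λs → y = x) ∧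
        (L1Set Λ Λ2 Λs lam1).ncard = N1) ∧
    (∀ lam2 ∈ Λ2,
      (∀ x ∈ L2Set Λ Λ1 Λs lam2, ∀ y ∈ L2Set Λ Λ1 Λs lam2, y - x ∈ Λs → y = x) ∧
        (L2Set Λ Λ1 Λs lam2).ncard = N2) :=
  stmt2_general Λ Λ1 Λ2 Λs h1 h2 hs1 hs2 hclean N1 N2 hidx1 hidx2
end

section
/- Let P1 = Λ1 ∩ V0 and E0 = {(λ1, λ2) : λ1 ∈ P1, λ2 ∈ L1(λ1)}. Then |E0| = N1·N2, and distinct elements of E0 lie in distinct cosets under the diagonal Λs-action (i.e. if (λ1, λ2), (λ1 + s, λ2 + s) ∈ E0 with s ∈ Λs, then s = 0). Hence the number of cosets of edges modulo Λs represented by E0 equals N1·N2 = |V0|, the number of lattice points in the discrete Voronoi set V0. -/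
/-
Each coset of `Λs` in `Λ` meets `V0` exactly once: the unique nearest point `p ∈ Λs` of `x ∈ Λ`
gives the representative `x - p`, and two points of `V0` differing by `s ∈ Λs` would each be
strictly closer to the origin than the other. So `V0` is a transversal of `Λs` in `Λ`, its trace
on `Λ1` is a transversal of `Λs` in `Λ1`, and every `L1(λ1)` is a transversal of `Λs` in `Λ2`.
Counting `E0` fibre by fibre over `P1` gives `N2 · N1`.
-/

section Transversal

variable {G : Type*} [AddCommGroup G]

lemma QuotientAddGroup.mk_eq_mk_iff_sub_mem_of_addSubgroupOf {K H : AddSubgroup G} {x y : H} :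
    (x : H ⧸ K.addSubgroupOf H) = y ↔ (y : G) - x ∈ K := by
  rw [QuotientAddGroup.eq, AddSubgroup.mem_addSubgroupOf, AddSubgroup.coe_add,
    AddSubgroup.coe_neg, neg_add_eq_sub]

structure IsCosetTransversal (K H : AddSubgroup G) (S : Set G) : Prop where
  subset : S ⊆ H
  eq_of_sub_mem : ∀ ⦃a⦄, a ∈ S → ∀ ⦃b⦄, b ∈ S → a - b ∈ K → a = b
  exists_sub_mem : ∀ x ∈ H, ∃ v ∈ S, x - v ∈ K

namespace IsCosetTransversal

variable {K H H' : AddSubgroup G} {S : Set G}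

noncomputable def equivQuotient (h : IsCosetTransversal K H S) : S ≃ H ⧸ K.addSubgroupOf H :=
  Equiv.ofBijective (fun v => ((⟨v, h.subset v.2⟩ : H) : H ⧸ K.addSubgroupOf H)) <| by
    refine ⟨fun a b hab => Subtype.ext ?_, ?_⟩
    · exact (h.eq_of_sub_mem b.2 a.2
        (QuotientAddGroup.mk_eq_mk_iff_sub_mem_of_addSubgroupOf.mp hab)).symm
    · rintro ⟨x⟩
      obtain ⟨v, hv, hxv⟩ := h.exists_sub_mem x x.2
      exact ⟨⟨v, hv⟩, QuotientAddGroup.mk_eq_mk_iff_sub_mem_of_addSubgroupOf.mpr hxv⟩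

lemma ncard_eq_index (h : IsCosetTransversal K H S) : S.ncard = (K.addSubgroupOf H).index := by
  rw [AddSubgroup.index, ← Nat.card_coe_set_eq]
  exact Nat.card_congr h.equivQuotient

lemma inter_of_le (h : IsCosetTransversal K H S) (hKH' : K ≤ H') (hH' : H' ≤ H) :
    IsCosetTransversal K H' (H' ∩ S) where
  subset _ hx := hx.1
  eq_of_sub_mem _ ha _ hb := h.eq_of_sub_mem ha.2 hb.2
  exists_sub_mem x hx := by
    obtain ⟨v, hv, hxv⟩ := h.exists_sub_mem x (hH' hx)
    refine ⟨v, ⟨?_, hv⟩, hxv⟩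
    simpa using H'.sub_mem hx (hKH' hxv)

lemma preimage_sub (h : IsCosetTransversal K H S) {a : G} (ha : a ∈ H) :
    IsCosetTransversal K H ((· - a) ⁻¹' S) where
  subset x hx := by simpa using H.add_mem (h.subset hx) ha
  eq_of_sub_mem x hx y hy hxy := by
    simpa using h.eq_of_sub_mem hx hy (by simpa using hxy)
  exists_sub_mem x hx := by
    obtain ⟨v, hv, hxv⟩ := h.exists_sub_mem (x - a) (H.sub_mem hx ha)
    exact ⟨v + a, by simpa using hv, by simpa [sub_sub, add_comm] using hxv⟩

end IsCosetTransversal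

lemma ncard_setOf_fst_mem_snd_mem {K H K' H' : AddSubgroup G} {A : Set G} {B : G → Set G}
    (hA : IsCosetTransversal K H A) (hB : ∀ a ∈ A, IsCosetTransversal K' H' (B a)) :
    {p : G × G | p.1 ∈ A ∧ p.2 ∈ B p.1}.ncard =
      (K.addSubgroupOf H).index * (K'.addSubgroupOf H').index := by
  let toSigma : {p : G × G | p.1 ∈ A ∧ p.2 ∈ B p.1} ≃ Σ a : A, B a :=
    { toFun p := ⟨⟨p.1.1, p.2.1⟩, ⟨p.1.2, p.2.2⟩⟩
      invFun q := ⟨(q.1, q.2), q.1.2, q.2.2⟩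
      left_inv _ := rfl
      right_inv _ := rfl }
  rw [AddSubgroup.index, AddSubgroup.index, ← Nat.card_prod, ← Nat.card_coe_set_eq]
  exact Nat.card_congr <| toSigma.trans <|
    (Equiv.sigmaCongrRight fun a : A => (hB a a.2).equivQuotient).trans <|
    (Equiv.sigmaEquivProd A _).trans (hA.equivQuotient.prodCongr (Equiv.refl _))

end Transversal

section Voronoi

variable {L : ℕ} {Λ Λs : AddSubgroup (EuclideanSpace ℝ (Fin L))}

lemma eq_of_sub_mem_of_mem_voronoiSet {v v' : EuclideanSpace ℝ (Fin L)}
    (hv : v ∈ voronoiSet Λ Λs) (hv' : v' ∈ voronoiSet Λ Λs) (hsub : v - v' ∈ Λs) : v = v' := by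
  by_contra hne
  have hsub0 : v - v' ≠ 0 := sub_ne_zero.mpr hne
  have hlt := hv.2 _ hsub hsub0
  have hlt' := hv'.2 _ (neg_mem hsub) (neg_ne_zero.mpr hsub0)
  rw [sub_sub_cancel] at hlt
  rw [sub_neg_eq_add, add_sub_cancel] at hlt'
  exact lt_asymm hlt hlt'

lemma exists_mem_voronoiSet_sub_mem (hclean : IsClean Λ Λs) (hsΛ : Λs ≤ Λ)
    {x : EuclideanSpace ℝ (Fin L)} (hx : x ∈ Λ) : ∃ v ∈ voronoiSet Λ Λs, x - v ∈ Λs := by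
  obtain ⟨p, ⟨hp, hpmin⟩, huniq⟩ := hclean x hx
  refine ⟨x - p, ⟨Λ.sub_mem hx (hsΛ hp), fun s hs hs0 => ?_⟩, by simpa using hp⟩
  rw [sub_sub]
  refine (hpmin _ (add_mem hp hs)).lt_of_ne fun heq => hs0 ?_
  -- equality would make `p + s` a second nearest point
  have hnearest : p + s = p := huniq _ ⟨add_mem hp hs, fun q hq => heq ▸ hpmin q hq⟩
  simpa using hnearest

lemma isCosetTransversal_voronoiSet (hclean : IsClean Λ Λs) (hsΛ : Λs ≤ Λ) :
    IsCosetTransversal Λs Λ (voronoiSet Λ Λs) where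
  subset _ hx := hx.1
  eq_of_sub_mem _ ha _ hb := eq_of_sub_mem_of_mem_voronoiSet ha hb
  exists_sub_mem _ hx := exists_mem_voronoiSet_sub_mem hclean hsΛ hx

end Voronoi

theorem stmt5_general {L : ℕ} (Λ Λ1 Λ2 Λs : AddSubgroup (EuclideanSpace ℝ (Fin L)))
    (h1 : Λ1 ≤ Λ) (h2 : Λ2 ≤ Λ)
    (hs1 : Λs ≤ Λ1) (hs2 : Λs ≤ Λ2)
    (hclean : IsClean Λ Λs)
    (N1 N2 : ℕ)
    (hidx1 : (Λs.addSubgroupOf Λ2).index = N1)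
    (hidx2 : (Λs.addSubgroupOf Λ1).index = N2)
    (hidxs : (Λs.addSubgroupOf Λ).index = N1 * N2)
    -- `P1 = Λ1 ∩ V0` and the edge set `E0 = {(λ1, λ2) : λ1 ∈ P1, λ2 ∈ L1(λ1)}`
    (E0 : Set (EuclideanSpace ℝ (Fin L) × EuclideanSpace ℝ (Fin L)))
    (hE0 : E0 = {p | (p.1 ∈ Λ1 ∧ p.1 ∈ voronoiSet Λ Λs) ∧ p.2 ∈ L1Set Λ Λ2 Λs p.1}) :
    E0.ncard = N1 * N2 ∧
      (∀ p ∈ E0, ∀ s ∈ Λs, (p.1 + s, p.2 + s) ∈ E0 → s = 0) ∧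
      (voronoiSet Λ Λs).ncard = N1 * N2 := by
  subst hE0
  have hV := isCosetTransversal_voronoiSet hclean (hs1.trans h1)
  have hP1 : IsCosetTransversal Λs Λ1 (Λ1 ∩ voronoiSet Λ Λs) := hV.inter_of_le hs1 h1
  have hL1 : ∀ a ∈ (Λ1 : Set _) ∩ voronoiSet Λ Λs, IsCosetTransversal Λs Λ2 (L1Set Λ Λ2 Λs a) :=
    fun a ha => (hV.preimage_sub (h1 ha.1)).inter_of_le hs2 h2
  refine ⟨?_, ?_, by rw [hV.ncard_eq_index, hidxs]⟩
  · rw [← hidx1, ← hidx2, mul_comm]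
    exact ncard_setOf_fst_mem_snd_mem hP1 hL1
  · rintro p hp s hs hps
    simpa using eq_of_sub_mem_of_mem_voronoiSet hps.1.2 hp.1.2 (by simpa using hs)

theorem stmt5 {L : ℕ} (Λ Λ1 Λ2 Λs : AddSubgroup (EuclideanSpace ℝ (Fin L)))
    (hΛ : IsLattice Λ) (h1 : Λ1 ≤ Λ) (h2 : Λ2 ≤ Λ)
    (hs1 : Λs ≤ Λ1) (hs2 : Λs ≤ Λ2)
    (hclean : IsClean Λ Λs)
    (N1 N2 : ℕ) (hN1pos : 0 < N1) (hN2pos : 0 < N2)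
    (hidx1 : (Λs.addSubgroupOf Λ2).index = N1)
    (hidx2 : (Λs.addSubgroupOf Λ1).index = N2)
    (hidxs : (Λs.addSubgroupOf Λ).index = N1 * N2)
    -- `P1 = Λ1 ∩ V0` and the edge set `E0 = {(λ1, λ2) : λ1 ∈ P1, λ2 ∈ L1(λ1)}`
    (E0 : Set (EuclideanSpace ℝ (Fin L) × EuclideanSpace ℝ (Fin L)))
    (hE0 : E0 = {p | (p.1 ∈ Λ1 ∧ p.1 ∈ voronoiSet Λ Λs) ∧ p.2 ∈ L1Set Λ Λ2 Λs p.1}) :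
    E0.ncard = N1 * N2 ∧
      (∀ p ∈ E0, ∀ s ∈ Λs, (p.1 + s, p.2 + s) ∈ E0 → s = 0) ∧
      (voronoiSet Λ Λs).ncard = N1 * N2 :=
  stmt5_general Λ Λ1 Λ2 Λs h1 h2 hs1 hs2 hclean N1 N2 hidx1 hidx2 hidxs E0 hE0
end
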